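/- arXiv:1104.1400 — 6 statements merged into one kernel-verified Lean document; each statement's English description precedes it below -/
import Mathlib

section
/- Let $(F, \Gamma)$ be a matched pair of groups with actions $\vartriangleright : \Gamma \times F \to F$ and $\vartriangleleft : \Gamma \times F \to \Gamma$. If $F' \subseteq F$ is a subgroup and $\Gamma' = \{g \in \Gamma \mid g \vartriangleright F' = F'\}$, then $\Gamma'$ is a subgroup of $\Gamma$, and for all $s \in \Gamma'$ and $x \in F'$ one has $s \vartriangleleft x \in \Gamma'$; in particular $(F', \Gamma')$ is again a matched pair under the restricted actions. -/
/-- For a matched pair of groups `(F, Γ)` with actions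
`r = ▷ : Γ → F → F` and `l = ◁ : Γ → F → Γ`, and a subgroup `F' ≤ F`, the set
`Γ' = {g ∈ Γ | g ▷ F' = F'}` is a subgroup of `Γ`, and for `s ∈ Γ'`, `x ∈ F'` one has
`s ◁ x ∈ Γ'` (and `s ▷ x ∈ F'`), so `(F', Γ')` is again a matched pair by restriction. -/
theorem matched_pair_restriction {F Γ : Type*} [Group F] [Group Γ]
    (r : Γ → F → F) (l : Γ → F → Γ)
    (hr1 : ∀ x, r 1 x = x) (hrmul : ∀ s t x, r (s * t) x = r s (r t x))
    (hl1 : ∀ s, l s 1 = s) (hlmul : ∀ s x y, l s (x * y) = l (l s x) y)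
    (hrone : ∀ s, r s 1 = 1) (hlone : ∀ x, l 1 x = 1)
    (hcomp1 : ∀ s x y, r s (x * y) = r s x * r (l s x) y)
    (hcomp2 : ∀ s t x, l (s * t) x = l s (r t x) * l t x)
    (F' : Subgroup F) :
    ∃ Γ' : Subgroup Γ,
      (∀ g : Γ, g ∈ Γ' ↔ r g '' (F' : Set F) = (F' : Set F)) ∧
      (∀ s ∈ Γ', ∀ x ∈ F', l s x ∈ Γ') ∧
      (∀ s ∈ Γ', ∀ x ∈ F', r s x ∈ F') := by
  have hcomp : ∀ s t : Γ, r (s * t) = r s ∘ r t := by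
    intro s t; funext x; exact hrmul s t x
  have hid : r (1 : Γ) = id := by funext x; exact hr1 x
  refine ⟨{ carrier := {g : Γ | r g '' (F' : Set F) = (F' : Set F)}
            one_mem' := by simp [hid]
            mul_mem' := by
              intro s t hs ht
              show r (s * t) '' _ = _
              rw [hcomp, Set.image_comp, ht, hs]
            inv_mem' := by
              intro g hg
              show r g⁻¹ '' _ = _
              conv_lhs => rw [← hg]
              rw [← Set.image_comp, ← hcomp, inv_mul_cancel, hid, Set.image_id] },
    fun g => Iff.rfl, ?_, ?_⟩
  · -- l-stability
    intro s hs x hx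
    have hs' : r s '' (F' : Set F) = (F' : Set F) := hs
    have hrsx : r s x ∈ F' := by
      have : r s x ∈ r s '' (F' : Set F) := ⟨x, hx, rfl⟩
      rwa [hs'] at this
    show r (l s x) '' (F' : Set F) = (F' : Set F)
    apply Set.eq_of_subset_of_subset
    · rintro _ ⟨y, hy, rfl⟩
      have key : r (l s x) y = (r s x)⁻¹ * r s (x * y) := by
        rw [hcomp1, inv_mul_cancel_left]
      rw [key]
      exact F'.mul_mem (F'.inv_mem hrsx)
        (by have : r s (x * y) ∈ r s '' (F' : Set F) := ⟨x * y, F'.mul_mem hx hy, rfl⟩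
            rwa [hs'] at this)
    · intro z hz
      have : r s x * z ∈ (F' : Set F) := F'.mul_mem hrsx hz
      rw [← hs'] at this
      obtain ⟨w, hw, hw2⟩ := this
      refine ⟨x⁻¹ * w, F'.mul_mem (F'.inv_mem hx) hw, ?_⟩
      have key := hcomp1 s x (x⁻¹ * w)
      rw [mul_inv_cancel_left, hw2] at key
      exact mul_left_cancel key.symm
  · intro s hs x hx
    have hs' : r s '' (F' : Set F) = (F' : Set F) := hs
    have : r s x ∈ r s '' (F' : Set F) := ⟨x, hx, rfl⟩
    rwa [hs'] at this
end

section
/- Let $n \geq 2$ and consider the matched pair $(\mathbb{S}_{n-1}, C_n)$ from the exact factorization $\mathbb{S}_n = F C_n$, $F$ the stabilizer of $n$, $C_n = \langle z\rangle$ with $z = (1\,2\,\cdots\,n)$. For each $1 \leq j \leq n-1$, the stabilizer in $F$ of $z^j$ under the action $\vartriangleleft$ is $F_{z^j} = \{x \in F \mid x(n-j) = n-j\}$, which is isomorphic to $\mathbb{S}_{n-2}$. In particular, the only subgroup of $F$ acting trivially on $C_n$ (via $\vartriangleleft$) is the trivial subgroup, provided $n \geq 3$. -/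
/-!
Write `g * x = r * l` with `r` fixing the last point `n` and `l ∈ C_n`. Evaluating at `l⁻¹ n`
gives `x (l⁻¹ n) = g⁻¹ n`, and since only the identity of `C_n` fixes `n`, we get `l = g` iff
`x` fixes `g⁻¹ n`; for `g = z^j` this point is `n - j`. The permutations fixing both `n` and
`n - j` are those supported on the remaining `n - 2` points, and since `g⁻¹ n` runs over all
points as `g` runs over `C_n`, an `x` with `g ◁ x = g` for all `g` is the identity.
-/

open Equiv MulAction

section Factorization

variable {G α : Type*} [Group G] [MulAction G α] {a : α}

theorem smul_inv_smul_eq_of_mul_eq_mul {g x r l : G} (hr : r • a = a) (h : g * x = r * l) :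
    x • l⁻¹ • a = g⁻¹ • a := by
  have hx : x * l⁻¹ = g⁻¹ * r := by
    rw [mul_inv_eq_iff_eq_mul, mul_assoc, ← h, inv_mul_cancel_left]
  rw [smul_smul, hx, mul_smul, hr]

theorem eq_iff_smul_inv_smul_eq_of_mul_eq_mul {C : Subgroup G}
    (hfree : ∀ c ∈ C, c • a = a → c = 1) {g x r l : G} (hg : g ∈ C) (hl : l ∈ C)
    (hr : r • a = a) (h : g * x = r * l) :
    l = g ↔ x • g⁻¹ • a = g⁻¹ • a := by
  refine ⟨fun hlg => hlg ▸ smul_inv_smul_eq_of_mul_eq_mul hr (hlg ▸ h), fun hx => ?_⟩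
  have hinv : l⁻¹ • a = g⁻¹ • a :=
    smul_left_cancel x ((smul_inv_smul_eq_of_mul_eq_mul hr h).trans hx.symm)
  have hfix : (g * l⁻¹) • a = a := by rw [mul_smul, hinv, smul_inv_smul]
  exact (mul_inv_eq_one.mp (hfree _ (C.mul_mem hg (C.inv_mem hl)) hfix)).symm

end Factorization

section Rotation

open Fin.NatCast

theorem finRotate_pow_apply (m k : ℕ) (i : Fin (m + 1)) :
    (finRotate (m + 1) ^ k) i = i + k := by
  induction k generalizing i with
  | zero => simp
  | succ k ih =>
    rw [pow_succ, Perm.mul_apply, finRotate_apply, ih]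
    push_cast
    abel

theorem eq_one_of_mem_zpowers_finRotate_of_apply_eq {m : ℕ} {c : Perm (Fin (m + 1))}
    (hc : c ∈ Subgroup.zpowers (finRotate (m + 1))) {i : Fin (m + 1)} (hi : c i = i) :
    c = 1 := by
  obtain ⟨k, rfl⟩ := mem_powers_iff_mem_zpowers.mpr hc
  rw [finRotate_pow_apply] at hi
  have hk : (k : Fin (m + 1)) = 0 := add_eq_left.mp hi
  ext j
  rw [finRotate_pow_apply, hk, add_zero, Perm.one_apply]

theorem finRotate_pow_apply_eq_last {m k : ℕ} {i : Fin (m + 1)} (h : i.val + k = m) :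
    (finRotate (m + 1) ^ k) i = Fin.last m := by
  rw [finRotate_pow_apply]
  ext
  rw [Fin.val_add, Fin.val_natCast, Fin.val_last, Nat.add_mod_mod, h,
    Nat.mod_eq_of_lt m.lt_succ_self]

end Rotation

section TwoPointStabilizer

variable {α : Type*} [DecidableEq α] [Fintype α]

theorem map_stabilizer_stabilizer_eq_range_ofSubtype (a b : α) :
    (stabilizer (stabilizer (Perm α) a) b).map (stabilizer (Perm α) a).subtype =
      (Perm.ofSubtype : Perm {i // i ≠ a ∧ i ≠ b} →* Perm α).range := by
  ext g
  rw [Perm.mem_range_ofSubtype_iff]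
  simp only [Subgroup.mem_map, mem_stabilizer_iff, Subgroup.subtype_apply, Subtype.exists,
    Subgroup.mk_smul, Perm.smul_def, exists_and_left, exists_prop, exists_eq_right_right, ne_eq]
  constructor
  · rintro ⟨hb, ha⟩ i hi
    exact ⟨fun h => Perm.mem_support.mp hi (h ▸ ha), fun h => Perm.mem_support.mp hi (h ▸ hb)⟩
  · intro h
    exact ⟨Perm.notMem_support.mp fun hb => (h hb).2 rfl,
      Perm.notMem_support.mp fun ha => (h ha).1 rfl⟩

noncomputable def stabilizerStabilizerEquivPerm (a b : α) :
    stabilizer (stabilizer (Perm α) a) b ≃* Perm {i // i ≠ a ∧ i ≠ b} :=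
  ((Subgroup.equivMapOfInjective _ _ Subtype.val_injective).trans
    (MulEquiv.subgroupCongr (map_stabilizer_stabilizer_eq_range_ofSubtype a b))).trans
    (MonoidHom.ofInjective Perm.ofSubtype_injective).symm

theorem card_subtype_ne_and_ne {a b : α} (hab : a ≠ b) :
    Fintype.card {i // i ≠ a ∧ i ≠ b} = Fintype.card α - 2 := by
  rw [Fintype.card_subtype]
  simp only [ne_eq, Finset.filter_and, Finset.filter_ne', Finset.erase_inter, Finset.univ_inter]
  rw [Finset.card_erase_of_mem (by simpa using hab), Finset.card_erase_of_mem (Finset.mem_univ b),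
    Finset.card_univ]
  omega

end TwoPointStabilizer

/-- For `n = m+1 ≥ 2`, with the matched pair `(S_{n-1}, C_n)` from the
exact factorization `S_n = F·C_n` (actions determined by `g·x = (g ▷ x)·(g ◁ x)`):
for `1 ≤ j ≤ n-1`, the stabilizer in `F` of `z^j` under `◁` is
`{x ∈ F | x(n-j) = n-j}` (0-indexed: `x` fixes `m - j`), a subgroup isomorphic to
`S_{n-2}`. In particular, for `n ≥ 3`, the only element of `F` acting trivially on `C_n`
is the identity, so the only subgroup of `F` acting trivially on `C_n` is trivial. -/
theorem sn_cn_stabilizers (m : ℕ)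
    (r : Subgroup.zpowers (finRotate (m + 1)) →
         MulAction.stabilizer (Equiv.Perm (Fin (m + 1))) (Fin.last m) →
         MulAction.stabilizer (Equiv.Perm (Fin (m + 1))) (Fin.last m))
    (l : Subgroup.zpowers (finRotate (m + 1)) →
         MulAction.stabilizer (Equiv.Perm (Fin (m + 1))) (Fin.last m) →
         Subgroup.zpowers (finRotate (m + 1)))
    (hdef : ∀ (g : Subgroup.zpowers (finRotate (m + 1)))
        (x : MulAction.stabilizer (Equiv.Perm (Fin (m + 1))) (Fin.last m)),
        (↑g * ↑x : Equiv.Perm (Fin (m + 1))) = ↑(r g x) * ↑(l g x)) :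
    (∀ j : ℕ, 1 ≤ j → j ≤ m →
      ∃ S : Subgroup (MulAction.stabilizer (Equiv.Perm (Fin (m + 1))) (Fin.last m)),
        (∀ x, x ∈ S ↔
          l ⟨finRotate (m + 1) ^ j, Subgroup.pow_mem _ (Subgroup.mem_zpowers _) j⟩ x
            = ⟨finRotate (m + 1) ^ j, Subgroup.pow_mem _ (Subgroup.mem_zpowers _) j⟩) ∧
        (∀ x, x ∈ S ↔
          (↑x : Equiv.Perm (Fin (m + 1))) ⟨m - j, by omega⟩ = ⟨m - j, by omega⟩) ∧
        Nonempty (S ≃* Equiv.Perm (Fin (m - 1)))) ∧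
    (3 ≤ m + 1 → ∀ x, (∀ g, l g x = g) → x = 1) := by
  have hl : ∀ g x, l g x = g ↔
      (x : Perm (Fin (m + 1))) ((g : Perm _)⁻¹ (Fin.last m)) = (g : Perm _)⁻¹ (Fin.last m) :=
    fun g x => Subtype.ext_iff.trans <| eq_iff_smul_inv_smul_eq_of_mul_eq_mul
      (fun _ hc => eq_one_of_mem_zpowers_finRotate_of_apply_eq hc) g.2 (l g x).2 (r g x).2
      (hdef g x)
  have hinv {k : ℕ} {i : Fin (m + 1)} (h : i.val + k = m) :
      (finRotate (m + 1) ^ k)⁻¹ (Fin.last m) = i :=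
    Perm.inv_eq_iff_eq.mpr (finRotate_pow_apply_eq_last h).symm
  refine ⟨fun j hj hjm => ?_, fun _ x hx => ?_⟩
  · refine ⟨stabilizer _ (⟨m - j, by omega⟩ : Fin (m + 1)), fun x => ?_, fun _ => Iff.rfl, ?_⟩
    · rw [hl, hinv (i := ⟨m - j, _⟩) (Nat.sub_add_cancel hjm)]
      rfl
    · have hne : Fin.last m ≠ ⟨m - j, by omega⟩ := by
        simp only [Ne, Fin.ext_iff, Fin.val_last]; omega
      have e := Fintype.equivFinOfCardEq (n := m - 1)
        ((card_subtype_ne_and_ne hne).trans (by simp))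
      exact ⟨(stabilizerStabilizerEquivPerm _ _).trans e.permCongrHom⟩
  · ext i : 2
    have hfix := (hl _ x).mp (hx ⟨_, Subgroup.pow_mem _ (Subgroup.mem_zpowers _) (m - i)⟩)
    rwa [hinv (i := i) (by omega)] at hfix
end

section
/- Consider the matched pair $(\mathbb{S}_4, C_5)$ arising from the exact factorization $\mathbb{S}_5 = F C_5$ with $F$ the stabilizer of the point $5$ and $C_5 = \langle (1\,2\,3\,4\,5) \rangle$. Then every abelian subgroup of $F \cong \mathbb{S}_4$ that is stable under the action $\vartriangleright$ of $C_5$ is contained in the cyclic subgroup generated by the $4$-cycle $(1\,3\,4\,2)$. In particular, the abelian $C_5$-stable subgroups of $F$ do not generate $F$. -/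
set_option maxRecDepth 100000


/-- The 4-cycle `(1 3 4 2)` of `S_5`, 0-indexed as the cycle `(0 2 3 1)` on `Fin 5`. -/
def cycle1342 : Equiv.Perm (Fin 5) :=
  Equiv.swap 0 2 * Equiv.swap 2 3 * Equiv.swap 3 1

/-- The `F`-part of the factorization `σ = f · c`. -/
def fpart (σ : Equiv.Perm (Fin 5)) : Equiv.Perm (Fin 5) :=
  σ * ((finRotate 5) ^ (((4 : Fin 5) - σ⁻¹ 4 : Fin 5) : ℕ))⁻¹

/-- The `C`-part of the factorization `σ = f · c`. -/
def lpart (σ : Equiv.Perm (Fin 5)) : Equiv.Perm (Fin 5) :=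
  (finRotate 5) ^ (((4 : Fin 5) - σ⁻¹ 4 : Fin 5) : ℕ)

lemma fpart_mul_lpart (σ : Equiv.Perm (Fin 5)) : fpart σ * lpart σ = σ := by
  simp [fpart, lpart]

lemma fpart_fix : ∀ σ : Equiv.Perm (Fin 5), fpart σ 4 = 4 := by decide

lemma lpart_mem (σ : Equiv.Perm (Fin 5)) : lpart σ ∈ Subgroup.zpowers (finRotate 5) :=
  Subgroup.pow_mem _ (Subgroup.mem_zpowers _) _

lemma zpowers_rot_fix {d : Equiv.Perm (Fin 5)} (hd : d ∈ Subgroup.zpowers (finRotate 5))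
    (h4 : d 4 = 4) : d = 1 := by
  rw [← mem_powers_iff_mem_zpowers] at hd
  obtain ⟨n, rfl⟩ := hd
  show (finRotate 5) ^ n = 1
  replace h4 : ((finRotate 5) ^ n) 4 = 4 := h4
  have h5 : (finRotate 5) ^ 5 = 1 := by decide
  have hmod : (finRotate 5) ^ n = (finRotate 5) ^ (n % 5) := by
    conv_lhs => rw [← Nat.div_add_mod n 5]
    rw [pow_add, pow_mul, h5, one_pow, one_mul]
  rw [hmod] at h4 ⊢
  have key : ∀ m < 5, ((finRotate 5) ^ m) 4 = 4 → (finRotate 5) ^ m = 1 := by decide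
  exact key _ (Nat.mod_lt _ (by norm_num)) h4

def step (j : ℕ) (x : Equiv.Perm (Fin 5)) : Equiv.Perm (Fin 5) :=
  fpart ((finRotate 5) ^ j * x)

lemma keyfact : ∀ x : Equiv.Perm (Fin 5), x 4 = 4 →
    (x = 1 ∨ x = cycle1342 ∨ x = cycle1342 ^ 2 ∨ x = cycle1342 ^ 3) ∨
    x * step 1 x ≠ step 1 x * x ∨ x * step 2 x ≠ step 2 x * x := by decide

/-- For the matched pair `(S_4, C_5)` from the exact factorization
`S_5 = F·C_5` (`F` the stabilizer of the last point, `C_5 = ⟨(1 2 3 4 5)⟩`, actions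
determined by `g·x = (g ▷ x)·(g ◁ x)`): every abelian subgroup of `F` stable under the
action `▷` of `C_5` is contained in the cyclic subgroup `⟨(1 3 4 2)⟩`; in particular the
abelian `C_5`-stable subgroups of `F` do not generate `F`. -/
theorem s4_c5_abelian_stable_subgroups
    (r : Subgroup.zpowers (finRotate 5) →
         MulAction.stabilizer (Equiv.Perm (Fin 5)) (4 : Fin 5) →
         MulAction.stabilizer (Equiv.Perm (Fin 5)) (4 : Fin 5))
    (l : Subgroup.zpowers (finRotate 5) →
         MulAction.stabilizer (Equiv.Perm (Fin 5)) (4 : Fin 5) →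
         Subgroup.zpowers (finRotate 5))
    (hdef : ∀ (g : Subgroup.zpowers (finRotate 5))
        (x : MulAction.stabilizer (Equiv.Perm (Fin 5)) (4 : Fin 5)),
        (↑g * ↑x : Equiv.Perm (Fin 5)) = ↑(r g x) * ↑(l g x)) :
    (∀ T : Subgroup (Equiv.Perm (Fin 5)),
      T ≤ MulAction.stabilizer (Equiv.Perm (Fin 5)) (4 : Fin 5) →
      (∀ a ∈ T, ∀ b ∈ T, a * b = b * a) →
      (∀ (g : Subgroup.zpowers (finRotate 5))
         (x : MulAction.stabilizer (Equiv.Perm (Fin 5)) (4 : Fin 5)),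
         (↑x : Equiv.Perm (Fin 5)) ∈ T → (↑(r g x) : Equiv.Perm (Fin 5)) ∈ T) →
      T ≤ Subgroup.zpowers cycle1342) ∧
    Subgroup.closure
      (⋃ T ∈ {T : Subgroup (Equiv.Perm (Fin 5)) |
          T ≤ MulAction.stabilizer (Equiv.Perm (Fin 5)) (4 : Fin 5) ∧
          (∀ a ∈ T, ∀ b ∈ T, a * b = b * a) ∧
          (∀ (g : Subgroup.zpowers (finRotate 5))
             (x : MulAction.stabilizer (Equiv.Perm (Fin 5)) (4 : Fin 5)),
             (↑x : Equiv.Perm (Fin 5)) ∈ T → (↑(r g x) : Equiv.Perm (Fin 5)) ∈ T)},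
        (T : Set (Equiv.Perm (Fin 5))))
      ≠ MulAction.stabilizer (Equiv.Perm (Fin 5)) (4 : Fin 5) := by
  -- the coercion of `r g x` is `fpart (g * x)`
  have rcoe : ∀ (g : Subgroup.zpowers (finRotate 5))
      (x : MulAction.stabilizer (Equiv.Perm (Fin 5)) (4 : Fin 5)),
      (↑(r g x) : Equiv.Perm (Fin 5)) = fpart (↑g * ↑x) := by
    intro g x
    set σ : Equiv.Perm (Fin 5) := ↑g * ↑x with hσ
    have h1 : (↑(r g x) : Equiv.Perm (Fin 5)) = σ * (↑(l g x))⁻¹ :=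
      eq_mul_inv_of_mul_eq (hdef g x).symm
    have h2 : (↑(r g x) : Equiv.Perm (Fin 5)) = fpart σ * (lpart σ * (↑(l g x))⁻¹) := by
      rw [← mul_assoc, fpart_mul_lpart, h1]
    set d : Equiv.Perm (Fin 5) := lpart σ * (↑(l g x))⁻¹ with hdd
    have hr4 : (↑(r g x) : Equiv.Perm (Fin 5)) 4 = 4 := (r g x).2
    have hd4 : d 4 = 4 := by
      have := hr4
      rw [h2] at this
      have hinj := (fpart σ).injective
      have : fpart σ (d 4) = fpart σ 4 := by
        rw [fpart_fix]
        simpa [Equiv.Perm.mul_apply] using this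
      exact hinj this
    have hdmem : d ∈ Subgroup.zpowers (finRotate 5) :=
      Subgroup.mul_mem _ (lpart_mem σ) (Subgroup.inv_mem _ (l g x).2)
    have : d = 1 := zpowers_rot_fix hdmem hd4
    rw [h2, this, mul_one]
  have part1 : ∀ T : Subgroup (Equiv.Perm (Fin 5)),
      T ≤ MulAction.stabilizer (Equiv.Perm (Fin 5)) (4 : Fin 5) →
      (∀ a ∈ T, ∀ b ∈ T, a * b = b * a) →
      (∀ (g : Subgroup.zpowers (finRotate 5))
         (x : MulAction.stabilizer (Equiv.Perm (Fin 5)) (4 : Fin 5)),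
         (↑x : Equiv.Perm (Fin 5)) ∈ T → (↑(r g x) : Equiv.Perm (Fin 5)) ∈ T) →
      T ≤ Subgroup.zpowers cycle1342 := by
    intro T hsub hab hstab x hxT
    have hx4 : x 4 = 4 := by
      have := hsub hxT
      rwa [MulAction.mem_stabilizer_iff, Equiv.Perm.smul_def] at this
    have hxs : x ∈ MulAction.stabilizer (Equiv.Perm (Fin 5)) (4 : Fin 5) := hsub hxT
    have hstep : ∀ j : ℕ, step j x ∈ T := by
      intro j
      have hg : (finRotate 5) ^ j ∈ Subgroup.zpowers (finRotate 5) :=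
        Subgroup.pow_mem _ (Subgroup.mem_zpowers _) _
      have := hstab ⟨(finRotate 5) ^ j, hg⟩ ⟨x, hxs⟩ hxT
      rwa [rcoe] at this
    rcases keyfact x hx4 with (rfl | rfl | rfl | rfl) | hnc | hnc
    · exact Subgroup.one_mem _
    · exact Subgroup.mem_zpowers _
    · exact Subgroup.pow_mem _ (Subgroup.mem_zpowers _) _
    · exact Subgroup.pow_mem _ (Subgroup.mem_zpowers _) _
    · exact absurd (hab x hxT _ (hstep 1)) hnc
    · exact absurd (hab x hxT _ (hstep 2)) hnc
  refine ⟨part1, ?_⟩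
  intro hEq
  have hle : Subgroup.closure
      (⋃ T ∈ {T : Subgroup (Equiv.Perm (Fin 5)) |
          T ≤ MulAction.stabilizer (Equiv.Perm (Fin 5)) (4 : Fin 5) ∧
          (∀ a ∈ T, ∀ b ∈ T, a * b = b * a) ∧
          (∀ (g : Subgroup.zpowers (finRotate 5))
             (x : MulAction.stabilizer (Equiv.Perm (Fin 5)) (4 : Fin 5)),
             (↑x : Equiv.Perm (Fin 5)) ∈ T → (↑(r g x) : Equiv.Perm (Fin 5)) ∈ T)},
        (T : Set (Equiv.Perm (Fin 5)))) ≤ Subgroup.zpowers cycle1342 := by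
    apply Subgroup.closure_le _ |>.2
    intro x hx
    simp only [Set.mem_iUnion] at hx
    obtain ⟨T, ⟨h1, h2, h3⟩, hxT⟩ := hx
    exact part1 T h1 h2 h3 hxT
  have hswap : Equiv.swap (0 : Fin 5) 1 ∈
      MulAction.stabilizer (Equiv.Perm (Fin 5)) (4 : Fin 5) := by
    rw [MulAction.mem_stabilizer_iff, Equiv.Perm.smul_def]; decide
  rw [← hEq] at hswap
  have hmem := hle hswap
  rw [← mem_powers_iff_mem_zpowers] at hmem
  obtain ⟨n, hn⟩ := hmem
  replace hn : cycle1342 ^ n = Equiv.swap (0 : Fin 5) 1 := hn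
  have h4 : cycle1342 ^ 4 = 1 := by decide
  have hmod : cycle1342 ^ n = cycle1342 ^ (n % 4) := by
    conv_lhs => rw [← Nat.div_add_mod n 4]
    rw [pow_add, pow_mul, h4, one_pow, one_mul]
  rw [hmod] at hn
  have key : ∀ m < 4, cycle1342 ^ m ≠ Equiv.swap (0 : Fin 5) 1 := by decide
  exact key _ (Nat.mod_lt _ (by norm_num)) hn
end

section
/- Consider the matched pair $(\mathbb{S}_3, C_4)$ arising from the exact factorization $\mathbb{S}_4 = F C_4$ with $F$ the stabilizer of the point $4$ and $C_4 = \langle (1\,2\,3\,4)\rangle$. The action $\vartriangleright$ of $C_4$ on $F \cong \mathbb{S}_3$ has exactly three orbits: $\{1\}$, $\{(1\,3)\}$, and $\{(1\,2), (2\,3), (1\,2\,3), (1\,3\,2)\}$. Consequently, the only nontrivial abelian subgroup of $F$ stable under $\vartriangleright$ is $\langle (1\,3) \rangle \cong \mathbb{Z}_2$. -/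
private lemma zp_cases {a x : Equiv.Perm (Fin 4)} {n : ℕ} (hn : 0 < n) (h : a ^ n = 1)
    (hx : x ∈ Subgroup.zpowers a) : ∃ m, m < n ∧ x = a ^ m := by
  have hfin : IsOfFinOrder a := isOfFinOrder_iff_pow_eq_one.2 ⟨n, hn, h⟩
  rw [← hfin.mem_powers_iff_mem_zpowers] at hx
  obtain ⟨k, hk⟩ := hx
  refine ⟨k % n, Nat.mod_lt _ hn, ?_⟩
  have hk' : a ^ k = x := hk
  rw [← hk']
  conv_lhs => rw [← Nat.mod_add_div k n]
  rw [pow_add, pow_mul, h, one_pow, mul_one]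

private lemma memC_iff (p : Equiv.Perm (Fin 4)) :
    p ∈ Subgroup.zpowers (finRotate 4) ↔
      (p = 1 ∨ p = finRotate 4 ∨ p = (finRotate 4) ^ 2 ∨ p = (finRotate 4) ^ 3) := by
  constructor
  · intro hp
    obtain ⟨m, hm, rfl⟩ := zp_cases (n := 4) (by norm_num) (by decide) hp
    interval_cases m
    · exact Or.inl (pow_zero _)
    · exact Or.inr (Or.inl (pow_one _))
    · exact Or.inr (Or.inr (Or.inl rfl))
    · exact Or.inr (Or.inr (Or.inr rfl))
  · rintro (rfl | rfl | rfl | rfl)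
    · exact one_mem _
    · exact Subgroup.mem_zpowers _
    · exact pow_mem (Subgroup.mem_zpowers _) 2
    · exact pow_mem (Subgroup.mem_zpowers _) 3

private lemma memS_iff (p : Equiv.Perm (Fin 4)) :
    p ∈ Subgroup.zpowers (Equiv.swap (0 : Fin 4) 2) ↔
      (p = 1 ∨ p = Equiv.swap (0 : Fin 4) 2) := by
  constructor
  · intro hp
    obtain ⟨m, hm, rfl⟩ := zp_cases (n := 2) (by norm_num) (by decide) hp
    interval_cases m
    · exact Or.inl (pow_zero _)
    · exact Or.inr (pow_one _)
  · rintro (rfl | rfl)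
    · exact one_mem _
    · exact Subgroup.mem_zpowers _

private lemma fixC {p : Equiv.Perm (Fin 4)} (hp : p ∈ Subgroup.zpowers (finRotate 4))
    (h : p 3 = 3) : p = 1 := by
  rcases (memC_iff p).1 hp with rfl | rfl | rfl | rfl
  · rfl
  · exact absurd h (by decide)
  · exact absurd h (by decide)
  · exact absurd h (by decide)

private lemma uniq {a a' p p' : Equiv.Perm (Fin 4)} (ha : a 3 = 3) (ha' : a' 3 = 3)
    (hp : p ∈ Subgroup.zpowers (finRotate 4)) (hp' : p' ∈ Subgroup.zpowers (finRotate 4))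
    (h : a * p = a' * p') : a = a' := by
  have hq : a'⁻¹ * a = p' * p⁻¹ := by
    have h2 := congrArg (fun z => a'⁻¹ * z * p⁻¹) h
    simpa [mul_assoc] using h2
  have hqC : a'⁻¹ * a ∈ Subgroup.zpowers (finRotate 4) := by
    rw [hq]; exact mul_mem hp' (inv_mem hp)
  have hfix : (a'⁻¹ * a) 3 = 3 := by
    have h3 : a'⁻¹ 3 = 3 := by
      conv_lhs => rw [← ha']
      exact a'.symm_apply_apply 3
    simp [Equiv.Perm.mul_apply, ha, h3]
  have := fixC hqC hfix
  calc a = a' * (a'⁻¹ * a) := by rw [mul_inv_cancel_left]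
    _ = a' := by rw [this, mul_one]

private lemma mem_stab {σ : Equiv.Perm (Fin 4)} :
    σ ∈ MulAction.stabilizer (Equiv.Perm (Fin 4)) (3 : Fin 4) ↔ σ 3 = 3 := by
  rw [MulAction.mem_stabilizer_iff, Equiv.Perm.smul_def]

private lemma key
    (r : Subgroup.zpowers (finRotate 4) →
         MulAction.stabilizer (Equiv.Perm (Fin 4)) (3 : Fin 4) →
         MulAction.stabilizer (Equiv.Perm (Fin 4)) (3 : Fin 4))
    (l : Subgroup.zpowers (finRotate 4) →
         MulAction.stabilizer (Equiv.Perm (Fin 4)) (3 : Fin 4) →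
         Subgroup.zpowers (finRotate 4))
    (hdef : ∀ (g : Subgroup.zpowers (finRotate 4))
        (x : MulAction.stabilizer (Equiv.Perm (Fin 4)) (3 : Fin 4)),
        (↑g * ↑x : Equiv.Perm (Fin 4)) = ↑(r g x) * ↑(l g x))
    (g : Subgroup.zpowers (finRotate 4))
    (x : MulAction.stabilizer (Equiv.Perm (Fin 4)) (3 : Fin 4))
    (a p : Equiv.Perm (Fin 4)) (ha : a 3 = 3)
    (hp : p ∈ Subgroup.zpowers (finRotate 4))
    (h : (↑g * ↑x : Equiv.Perm (Fin 4)) = a * p) :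
    (↑(r g x) : Equiv.Perm (Fin 4)) = a := by
  exact uniq (mem_stab.1 (r g x).2) ha (l g x).2 hp ((hdef g x).symm.trans h)

private lemma stab_cases (σ : Equiv.Perm (Fin 4)) (h : σ 3 = 3) :
    σ = 1 ∨ σ = Equiv.swap 0 2 ∨ σ = Equiv.swap 0 1 ∨ σ = Equiv.swap 1 2 ∨
    σ = Equiv.swap 0 1 * Equiv.swap 1 2 ∨ σ = Equiv.swap 1 2 * Equiv.swap 0 1 := by
  revert h
  revert σ
  decide

private lemma solve
    (r : Subgroup.zpowers (finRotate 4) →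
         MulAction.stabilizer (Equiv.Perm (Fin 4)) (3 : Fin 4) →
         MulAction.stabilizer (Equiv.Perm (Fin 4)) (3 : Fin 4))
    (l : Subgroup.zpowers (finRotate 4) →
         MulAction.stabilizer (Equiv.Perm (Fin 4)) (3 : Fin 4) →
         Subgroup.zpowers (finRotate 4))
    (hdef : ∀ (g : Subgroup.zpowers (finRotate 4))
        (x : MulAction.stabilizer (Equiv.Perm (Fin 4)) (3 : Fin 4)),
        (↑g * ↑x : Equiv.Perm (Fin 4)) = ↑(r g x) * ↑(l g x))
    (x y : MulAction.stabilizer (Equiv.Perm (Fin 4)) (3 : Fin 4))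
    (k : ℕ) (X Y : Equiv.Perm (Fin 4))
    (hx : (↑x : Equiv.Perm (Fin 4)) = X) (hy : (↑y : Equiv.Perm (Fin 4)) = Y)
    (hY : Y 3 = 3)
    (hp : Y⁻¹ * ((finRotate 4) ^ k * X) ∈ Subgroup.zpowers (finRotate 4)) :
    ∃ g, r g x = y := by
  refine ⟨⟨(finRotate 4) ^ k, pow_mem (Subgroup.mem_zpowers _) k⟩, Subtype.ext ?_⟩
  rw [hy]
  refine key r l hdef _ x Y (Y⁻¹ * ((finRotate 4) ^ k * X)) hY hp ?_
  rw [mul_inv_cancel_left]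
  simp [hx]

/-- For the matched pair `(S_3, C_4)` from the exact factorization
`S_4 = F·C_4` (`F` the stabilizer of the last point, `C_4 = ⟨(1 2 3 4)⟩`, actions
determined by `g·x = (g ▷ x)·(g ◁ x)`): the action `▷` of `C_4` on `F ≅ S_3` has exactly
three orbits, `{1}`, `{(1 3)}` and `{(1 2), (2 3), (1 2 3), (1 3 2)}`. Consequently the
only nontrivial abelian subgroup of `F` stable under `▷` is `⟨(1 3)⟩ ≅ ℤ/2`. -/
theorem s3_c4_orbits
    (r : Subgroup.zpowers (finRotate 4) →
         MulAction.stabilizer (Equiv.Perm (Fin 4)) (3 : Fin 4) →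
         MulAction.stabilizer (Equiv.Perm (Fin 4)) (3 : Fin 4))
    (l : Subgroup.zpowers (finRotate 4) →
         MulAction.stabilizer (Equiv.Perm (Fin 4)) (3 : Fin 4) →
         Subgroup.zpowers (finRotate 4))
    (hdef : ∀ (g : Subgroup.zpowers (finRotate 4))
        (x : MulAction.stabilizer (Equiv.Perm (Fin 4)) (3 : Fin 4)),
        (↑g * ↑x : Equiv.Perm (Fin 4)) = ↑(r g x) * ↑(l g x)) :
    (∀ g, r g 1 = 1) ∧
    (∀ g (x : MulAction.stabilizer (Equiv.Perm (Fin 4)) (3 : Fin 4)),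
      (↑x : Equiv.Perm (Fin 4)) = Equiv.swap 0 2 → (↑(r g x) : Equiv.Perm (Fin 4)) = Equiv.swap 0 2) ∧
    (∀ x y : MulAction.stabilizer (Equiv.Perm (Fin 4)) (3 : Fin 4),
      (↑x : Equiv.Perm (Fin 4)) ∉ ({1, Equiv.swap 0 2} : Set (Equiv.Perm (Fin 4))) →
      (↑y : Equiv.Perm (Fin 4)) ∉ ({1, Equiv.swap 0 2} : Set (Equiv.Perm (Fin 4))) →
      ∃ g, r g x = y) ∧
    (∀ T : Subgroup (Equiv.Perm (Fin 4)),
      T ≤ MulAction.stabilizer (Equiv.Perm (Fin 4)) (3 : Fin 4) →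
      T ≠ ⊥ →
      (∀ a ∈ T, ∀ b ∈ T, a * b = b * a) →
      (∀ (g : Subgroup.zpowers (finRotate 4))
         (x : MulAction.stabilizer (Equiv.Perm (Fin 4)) (3 : Fin 4)),
         (↑x : Equiv.Perm (Fin 4)) ∈ T → (↑(r g x) : Equiv.Perm (Fin 4)) ∈ T) →
      T = Subgroup.zpowers (Equiv.swap (0 : Fin 4) 2)) := by
  have orbit3 : ∀ x y : MulAction.stabilizer (Equiv.Perm (Fin 4)) (3 : Fin 4),
      (↑x : Equiv.Perm (Fin 4)) ∉ ({1, Equiv.swap 0 2} : Set (Equiv.Perm (Fin 4))) →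
      (↑y : Equiv.Perm (Fin 4)) ∉ ({1, Equiv.swap 0 2} : Set (Equiv.Perm (Fin 4))) →
      ∃ g, r g x = y := by
    intro x y hxn hyn
    rcases stab_cases _ (mem_stab.1 x.2) with hx | hx | hx | hx | hx | hx
    · exact absurd (by simp [hx]) hxn
    · exact absurd (by simp [hx]) hxn
    · rcases stab_cases _ (mem_stab.1 y.2) with hy | hy | hy | hy | hy | hy
      · exact absurd (by simp [hy]) hyn
      · exact absurd (by simp [hy]) hyn
      · exact solve r l hdef x y 0 _ _ hx hy (by decide) ((memC_iff _).2 (by decide))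
      · exact solve r l hdef x y 1 _ _ hx hy (by decide) ((memC_iff _).2 (by decide))
      · exact solve r l hdef x y 3 _ _ hx hy (by decide) ((memC_iff _).2 (by decide))
      · exact solve r l hdef x y 2 _ _ hx hy (by decide) ((memC_iff _).2 (by decide))
    · rcases stab_cases _ (mem_stab.1 y.2) with hy | hy | hy | hy | hy | hy
      · exact absurd (by simp [hy]) hyn
      · exact absurd (by simp [hy]) hyn
      · exact solve r l hdef x y 3 _ _ hx hy (by decide) ((memC_iff _).2 (by decide))
      · exact solve r l hdef x y 0 _ _ hx hy (by decide) ((memC_iff _).2 (by decide))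
      · exact solve r l hdef x y 2 _ _ hx hy (by decide) ((memC_iff _).2 (by decide))
      · exact solve r l hdef x y 1 _ _ hx hy (by decide) ((memC_iff _).2 (by decide))
    · rcases stab_cases _ (mem_stab.1 y.2) with hy | hy | hy | hy | hy | hy
      · exact absurd (by simp [hy]) hyn
      · exact absurd (by simp [hy]) hyn
      · exact solve r l hdef x y 1 _ _ hx hy (by decide) ((memC_iff _).2 (by decide))
      · exact solve r l hdef x y 2 _ _ hx hy (by decide) ((memC_iff _).2 (by decide))
      · exact solve r l hdef x y 0 _ _ hx hy (by decide) ((memC_iff _).2 (by decide))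
      · exact solve r l hdef x y 3 _ _ hx hy (by decide) ((memC_iff _).2 (by decide))
    · rcases stab_cases _ (mem_stab.1 y.2) with hy | hy | hy | hy | hy | hy
      · exact absurd (by simp [hy]) hyn
      · exact absurd (by simp [hy]) hyn
      · exact solve r l hdef x y 2 _ _ hx hy (by decide) ((memC_iff _).2 (by decide))
      · exact solve r l hdef x y 3 _ _ hx hy (by decide) ((memC_iff _).2 (by decide))
      · exact solve r l hdef x y 1 _ _ hx hy (by decide) ((memC_iff _).2 (by decide))
      · exact solve r l hdef x y 0 _ _ hx hy (by decide) ((memC_iff _).2 (by decide))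
  refine ⟨?_, ?_, orbit3, ?_⟩
  · intro g
    refine Subtype.ext ?_
    have : ((1 : MulAction.stabilizer (Equiv.Perm (Fin 4)) (3 : Fin 4)) :
        Equiv.Perm (Fin 4)) = 1 := rfl
    refine (key r l hdef g 1 1 (↑g) (by decide) g.2 ?_).trans this.symm
    rw [this, mul_one, one_mul]
  · intro g x hx
    rcases (memC_iff _).1 g.2 with hg | hg | hg | hg
    · exact key r l hdef g x (Equiv.swap 0 2) 1 (by decide)
        (one_mem _) (by rw [hg, hx]; decide)
    · exact key r l hdef g x (Equiv.swap 0 2) ((finRotate 4) ^ 3) (by decide)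
        (pow_mem (Subgroup.mem_zpowers _) 3) (by rw [hg, hx]; decide)
    · exact key r l hdef g x (Equiv.swap 0 2) ((finRotate 4) ^ 2) (by decide)
        (pow_mem (Subgroup.mem_zpowers _) 2) (by rw [hg, hx]; decide)
    · exact key r l hdef g x (Equiv.swap 0 2) (finRotate 4) (by decide)
        (Subgroup.mem_zpowers _) (by rw [hg, hx]; decide)
  · intro T hle hbot hab hstab
    -- every element of T is 1 or swap 0 2
    have hmem : ∀ a ∈ T, a = 1 ∨ a = Equiv.swap (0 : Fin 4) 2 := by
      intro a haT
      rcases stab_cases a (mem_stab.1 (hle haT)) with h | h | h | h | h | h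
      · exact Or.inl h
      · exact Or.inr h
      all_goals exfalso
      all_goals {
        have hx3 : a 3 = 3 := mem_stab.1 (hle haT)
        set x : MulAction.stabilizer (Equiv.Perm (Fin 4)) (3 : Fin 4) := ⟨a, hle haT⟩ with hxdef
        have hxc : (↑x : Equiv.Perm (Fin 4)) = a := rfl
        have hxn : (↑x : Equiv.Perm (Fin 4)) ∉
            ({1, Equiv.swap 0 2} : Set (Equiv.Perm (Fin 4))) := by
          rw [hxc, h]; decide
        have hy1 : Equiv.swap (0 : Fin 4) 1 ∈
            MulAction.stabilizer (Equiv.Perm (Fin 4)) (3 : Fin 4) := mem_stab.2 (by decide)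
        have hy2 : Equiv.swap (1 : Fin 4) 2 ∈
            MulAction.stabilizer (Equiv.Perm (Fin 4)) (3 : Fin 4) := mem_stab.2 (by decide)
        obtain ⟨g1, hg1⟩ := orbit3 x ⟨_, hy1⟩ hxn (by rw [Subtype.coe_mk]; decide)
        obtain ⟨g2, hg2⟩ := orbit3 x ⟨_, hy2⟩ hxn (by rw [Subtype.coe_mk]; decide)
        have h1 : Equiv.swap (0 : Fin 4) 1 ∈ T := by
          have := hstab g1 x (by rw [hxc]; exact haT)
          rwa [hg1] at this
        have h2 : Equiv.swap (1 : Fin 4) 2 ∈ T := by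
          have := hstab g2 x (by rw [hxc]; exact haT)
          rwa [hg2] at this
        exact absurd (hab _ h1 _ h2) (by decide) }
    -- swap 0 2 ∈ T
    obtain ⟨⟨a, haT⟩, hane⟩ := Subgroup.ne_bot_iff_exists_ne_one.1 hbot
    have hane' : a ≠ 1 := fun h => hane (Subtype.ext h)
    have hsw : Equiv.swap (0 : Fin 4) 2 ∈ T := by
      rcases hmem a haT with h | h
      · exact absurd h hane'
      · rwa [← h]
    ext z
    rw [memS_iff]
    constructor
    · exact hmem z
    · rintro (rfl | rfl)
      · exact one_mem T
      · exact hsw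
end

section
/- Consider the matched pair $(\mathbb{S}_4, C_5)$ from the exact factorization $\mathbb{S}_5 = F C_5$, $F$ the stabilizer of $5$, $C_5 = \langle (1\,2\,3\,4\,5)\rangle$. The action $\vartriangleright$ of $C_5$ on the cyclic subgroup $\langle (1\,3\,4\,2)\rangle \leq F$ is trivial: $g \vartriangleright x = x$ for all $g \in C_5$ and all $x \in \langle (1\,3\,4\,2)\rangle$. -/
/-!
Write `g * x = (g ▷ x) * (g ◁ x)` with `g ∈ C₅` and `x` in the point stabiliser `F`. If `x`
normalises `C₅`, then `g * x = x * (x⁻¹ * g * x)` is already such a factorisation, so by uniqueness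
of the factorisation (`F ∩ C₅ = 1`, as a power of the 5-cycle fixing a point is trivial)
`g ▷ x = x`. The cycle `(1 3 4 2)` normalises `C₅`: it conjugates `(1 2 3 4 5)` to its cube.
-/

open Subgroup

theorem Subgroup.left_factor_eq_of_mem_normalizer {G : Type*} [Group G] {F C : Subgroup G}
    (hFC : Disjoint F C) {x f g c : G} (hx : x ∈ F) (hxC : x ∈ normalizer (C : Set G)) (hf : f ∈ F)
    (hg : g ∈ C) (hc : c ∈ C) (h : g * x = f * c) : f = x := by
  have hconj : x⁻¹ * g * x ∈ C := by simpa using (mem_normalizer_iff''.mp hxC g).mp hg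
  have hprod : (f * c : G) = x * (x⁻¹ * g * x) := by rw [← h]; group
  exact congrArg (fun p : F × C => (p.1 : G))
    (mul_injective_of_disjoint hFC (a₁ := (⟨f, hf⟩, ⟨c, hc⟩)) (a₂ := (⟨x, hx⟩, ⟨_, hconj⟩)) hprod)

theorem Subgroup.mem_normalizer_zpowers_of_conj_mem {G : Type*} [Group G] [Finite G] {σ c : G}
    (h : c * σ * c⁻¹ ∈ zpowers σ) : c ∈ normalizer (zpowers σ : Set G) :=
  mem_normalizer_fintype fun _ ⟨k, hk⟩ => hk ▸ conj_zpow (a := c) ▸ zpow_mem h k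

theorem Equiv.Perm.IsCycle.disjoint_stabilizer_zpowers {α : Type*} [Finite α]
    {σ : Equiv.Perm α} (hσ : σ.IsCycle) {a : α} (ha : σ a ≠ a) :
    _root_.Disjoint (MulAction.stabilizer (Equiv.Perm α) a) (zpowers σ) := by
  rw [disjoint_def]
  intro τ hτa hτσ
  obtain ⟨n, rfl⟩ := mem_powers_iff_mem_zpowers.mpr hτσ
  exact (hσ.pow_eq_one_iff' ha).mpr hτa

theorem cycle1342_mem_normalizer_zpowers_finRotate :
    cycle1342 ∈ normalizer (zpowers (finRotate 5) : Set (Equiv.Perm (Fin 5))) := by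
  apply mem_normalizer_zpowers_of_conj_mem
  rw [show cycle1342 * finRotate 5 * cycle1342⁻¹ = finRotate 5 ^ (3 : ℤ) by decide]
  exact zpow_mem_zpowers _ _

/-- For the matched pair `(S_4, C_5)` from the exact factorization
`S_5 = F·C_5` (actions determined by `g·x = (g ▷ x)·(g ◁ x)`): the action `▷` of `C_5`
on the cyclic subgroup `⟨(1 3 4 2)⟩ ≤ F` is trivial. -/
theorem s4_c5_acts_trivially_on_cycle
    (r : Subgroup.zpowers (finRotate 5) →
         MulAction.stabilizer (Equiv.Perm (Fin 5)) (4 : Fin 5) →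
         MulAction.stabilizer (Equiv.Perm (Fin 5)) (4 : Fin 5))
    (l : Subgroup.zpowers (finRotate 5) →
         MulAction.stabilizer (Equiv.Perm (Fin 5)) (4 : Fin 5) →
         Subgroup.zpowers (finRotate 5))
    (hdef : ∀ (g : Subgroup.zpowers (finRotate 5))
        (x : MulAction.stabilizer (Equiv.Perm (Fin 5)) (4 : Fin 5)),
        (↑g * ↑x : Equiv.Perm (Fin 5)) = ↑(r g x) * ↑(l g x)) :
    ∀ (g : Subgroup.zpowers (finRotate 5))
      (x : MulAction.stabilizer (Equiv.Perm (Fin 5)) (4 : Fin 5)),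
      (↑x : Equiv.Perm (Fin 5)) ∈ Subgroup.zpowers cycle1342 → r g x = x := by
  intro g x hx
  have hdisj : Disjoint (MulAction.stabilizer (Equiv.Perm (Fin 5)) (4 : Fin 5))
      (zpowers (finRotate 5)) :=
    isCycle_finRotate.disjoint_stabilizer_zpowers (by decide)
  have hnorm :
      (x : Equiv.Perm (Fin 5)) ∈ normalizer (zpowers (finRotate 5) : Set (Equiv.Perm (Fin 5))) :=
    zpowers_le.mpr cycle1342_mem_normalizer_zpowers_finRotate hx
  exact Subtype.ext <| left_factor_eq_of_mem_normalizer hdisj x.2 hnorm (r g x).2 g.2 (l g x).2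
    (hdef g x)
end

section
/- Let $n = 4$ or $n = 5$, and consider the matched pair $(\mathbb{S}_{n-1}, C_n)$ from the exact factorization $\mathbb{S}_n = F C_n$. If $x \in F$, $x \ne 1$, and $T \subseteq F$ is a subgroup with $x \in T$ that is stable under $\vartriangleright$ and acts trivially on $C_n$ via $\vartriangleleft$, then a contradiction follows; i.e., any subgroup of $F$ acting trivially on $C_n$ via $\vartriangleleft$ is trivial. -/
/-- Let `n = 4` or `n = 5`, and consider the matched pair
`(S_{n-1}, C_n)` from the exact factorization `S_n = F·C_n` (`F` the stabilizer of the
last point, actions determined by `g·x = (g ▷ x)·(g ◁ x)`). Any subgroup of `F` acting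
trivially on `C_n` via `◁` is trivial; equivalently, if `x ∈ F` satisfies `g ◁ x = g`
for all `g ∈ C_n`, then `x = 1`. -/
theorem sn_trivially_acting_subgroup_trivial (n : ℕ) (hn : n = 4 ∨ n = 5)
    (r : Subgroup.zpowers (finRotate n) →
         MulAction.stabilizer (Equiv.Perm (Fin n)) (⟨n - 1, by omega⟩ : Fin n) →
         MulAction.stabilizer (Equiv.Perm (Fin n)) (⟨n - 1, by omega⟩ : Fin n))
    (l : Subgroup.zpowers (finRotate n) →
         MulAction.stabilizer (Equiv.Perm (Fin n)) (⟨n - 1, by omega⟩ : Fin n) →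
         Subgroup.zpowers (finRotate n))
    (hdef : ∀ (g : Subgroup.zpowers (finRotate n))
        (x : MulAction.stabilizer (Equiv.Perm (Fin n)) (⟨n - 1, by omega⟩ : Fin n)),
        (↑g * ↑x : Equiv.Perm (Fin n)) = ↑(r g x) * ↑(l g x)) :
    ∀ x : MulAction.stabilizer (Equiv.Perm (Fin n)) (⟨n - 1, by omega⟩ : Fin n),
      (∀ g : Subgroup.zpowers (finRotate n), l g x = g) → x = 1 := by
  intro x hx
  have key : ∀ g : Equiv.Perm (Fin n), g ∈ Subgroup.zpowers (finRotate n) →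
      (x : Equiv.Perm (Fin n)) (g⁻¹ ⟨n - 1, by omega⟩) = g⁻¹ ⟨n - 1, by omega⟩ := by
    intro g hg
    have h1 := hdef ⟨g, hg⟩ x
    rw [hx ⟨g, hg⟩] at h1
    have h3 : (↑(r ⟨g, hg⟩ x) : Equiv.Perm (Fin n)) ⟨n - 1, by omega⟩ = ⟨n - 1, by omega⟩ :=
      (r ⟨g, hg⟩ x).2
    have h1' : g * (↑x : Equiv.Perm (Fin n)) = ↑(r ⟨g, hg⟩ x) * g := h1
    have h2 : (g * ↑x * g⁻¹ : Equiv.Perm (Fin n)) ⟨n - 1, by omega⟩ = ⟨n - 1, by omega⟩ := by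
      rw [show (g * (↑x : Equiv.Perm (Fin n)) * g⁻¹) = ↑(r ⟨g, hg⟩ x) by
        rw [h1']; group]
      exact h3
    simp only [Equiv.Perm.mul_apply] at h2
    have := congrArg (g⁻¹ : Equiv.Perm (Fin n)) h2
    simpa using this
  have hfix : ∀ i : Fin n, (x : Equiv.Perm (Fin n)) i = i := by
    intro i
    have trans : ∃ k : ℕ, ((finRotate n) ^ k)⁻¹ (⟨n - 1, by omega⟩ : Fin n) = i := by
      rcases hn with h | h <;> subst h <;> fin_cases i
      · exact ⟨3, by decide⟩
      · exact ⟨2, by decide⟩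
      · exact ⟨1, by decide⟩
      · exact ⟨0, by decide⟩
      · exact ⟨4, by decide⟩
      · exact ⟨3, by decide⟩
      · exact ⟨2, by decide⟩
      · exact ⟨1, by decide⟩
      · exact ⟨0, by decide⟩
    obtain ⟨k, hk⟩ := trans
    have := key ((finRotate n) ^ k) (Subgroup.npow_mem_zpowers _ k)
    rwa [hk] at this
  exact Subtype.ext (Equiv.ext hfix)
end
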